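/- There exists a constant C with 0 < C < 1 such that for all complex numbers z, z', ζ with |z| ≤ C|ζ| and |z'| ≤ C|ζ|, and for any choice of square roots, one has √|ζ| ≤ |√(z+ζ) − √(z'−ζ)| ≤ 2√|ζ|. -/

import Mathlib

/-!
Write `a = |s - t|` and `b = |s + t|`. Since `(s - t)(s + t) = s² - t² = 2ζ + (z - z')`, the product
`ab` is at least `2(1 - C)|ζ|`, while the parallelogram law gives
`a² + b² = 2(|z + ζ| + |z' - ζ|) ≤ 4(1 + C)|ζ|`. Hence `a²(4(1 + C)|ζ| - a²) ≥ a²b² ≥ 4(1 - C)²|ζ|²`,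
which traps `a²` between the two roots of a quadratic; for `C = 1/16` these are `9/8 |ζ|` and
`25/8 |ζ|`, inside `[|ζ|, 4|ζ|]`.
-/

theorem sq_mem_Icc_of_sq_add_sq_le_of_mul_le {a b u v : ℝ} (huv : u ≤ v)
    (hsum : a ^ 2 + b ^ 2 ≤ u + v) (hprod : u * v ≤ (a * b) ^ 2) :
    u ≤ a ^ 2 ∧ a ^ 2 ≤ v := by
  have hquad : (a ^ 2 - u) * (a ^ 2 - v) ≤ 0 := by
    nlinarith [mul_le_mul_of_nonneg_left hsum (sq_nonneg a)]
  constructor <;> nlinarith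

section SquareRoots

variable {C : ℝ} {z z' ζ s t : ℂ}

theorem two_mul_one_sub_mul_norm_le_norm_sub_mul_norm_add
    (hz : ‖z‖ ≤ C * ‖ζ‖) (hz' : ‖z'‖ ≤ C * ‖ζ‖) (hs : s ^ 2 = z + ζ) (ht : t ^ 2 = z' - ζ) :
    2 * (1 - C) * ‖ζ‖ ≤ ‖s - t‖ * ‖s + t‖ := by
  have hprod : (s - t) * (s + t) = 2 * ζ - (z' - z) := by
    linear_combination hs - ht
  calc 2 * (1 - C) * ‖ζ‖ ≤ ‖2 * ζ‖ - (‖z'‖ + ‖z‖) := by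
        rw [norm_mul, Complex.norm_two]; linarith
    _ ≤ ‖2 * ζ‖ - ‖z' - z‖ := by gcongr; exact norm_sub_le z' z
    _ ≤ ‖2 * ζ - (z' - z)‖ := norm_sub_norm_le _ _
    _ = ‖s - t‖ * ‖s + t‖ := by rw [← norm_mul, hprod]

theorem norm_sub_sq_add_norm_add_sq_le
    (hz : ‖z‖ ≤ C * ‖ζ‖) (hz' : ‖z'‖ ≤ C * ‖ζ‖) (hs : s ^ 2 = z + ζ) (ht : t ^ 2 = z' - ζ) :
    ‖s - t‖ ^ 2 + ‖s + t‖ ^ 2 ≤ 4 * (1 + C) * ‖ζ‖ := by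
  have hparallelogram := parallelogram_law_with_norm ℝ s t
  have hs_norm : ‖s‖ ^ 2 = ‖z + ζ‖ := by rw [← norm_pow, hs]
  have ht_norm : ‖t‖ ^ 2 = ‖z' - ζ‖ := by rw [← norm_pow, ht]
  linarith [norm_add_le z ζ, norm_sub_le z' ζ]

end SquareRoots

/-- Wermer-type sets, Lemma 2.3: there is `0 < C < 1` such that for all complex
`z, z', ζ` with `|z|, |z'| ≤ C|ζ|` and every choice of square roots,
`√|ζ| ≤ |√(z+ζ) − √(z'−ζ)| ≤ 2√|ζ|`. -/
theorem exists_constant_sqrt_slope_estimate :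
    ∃ C : ℝ, 0 < C ∧ C < 1 ∧
      ∀ z z' ζ s t : ℂ, ‖z‖ ≤ C * ‖ζ‖ →
        ‖z'‖ ≤ C * ‖ζ‖ →
        s ^ 2 = z + ζ → t ^ 2 = z' - ζ →
        Real.sqrt (‖ζ‖) ≤ ‖s - t‖ ∧
          ‖s - t‖ ≤ 2 * Real.sqrt (‖ζ‖) := by
  refine ⟨1 / 16, by norm_num, by norm_num, fun z z' ζ s t hz hz' hs ht => ?_⟩
  have hζ : 0 ≤ ‖ζ‖ := norm_nonneg ζ
  have hprod := two_mul_one_sub_mul_norm_le_norm_sub_mul_norm_add hz hz' hs ht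
  have hsum := norm_sub_sq_add_norm_add_sq_le hz hz' hs ht
  obtain ⟨hlower, hupper⟩ := sq_mem_Icc_of_sq_add_sq_le_of_mul_le
    (a := ‖s - t‖) (b := ‖s + t‖) (u := 9 / 8 * ‖ζ‖) (v := 25 / 8 * ‖ζ‖)
    (by linarith) (by linarith) (by nlinarith)
  constructor
  · rw [Real.sqrt_le_left (norm_nonneg _)]
    linarith
  · refine (pow_le_pow_iff_left₀ (norm_nonneg _) (by positivity) two_ne_zero).mp ?_
    rw [mul_pow, Real.sq_sqrt hζ]
    linarith
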